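/- Let x, δ, ε be integers satisfying x² − 2δ² = 2 − ε², and let k ∈ ℕ. Set x_k = H(2k)·x + 2·P(2k)·δ and δ_k = P(2k)·x + H(2k)·δ. Then H(2k)² − 2·P(2k)² = 1, x_k² − 2·δ_k² = 2 − ε², and gcd(x_k + δ_k, x_k − δ_k) = gcd(x + δ, x − δ). (This is the arithmetic content of the k-th order Brahmagupta move: it preserves the Pell-type norm equation and the coprimality of the weight parameters c = x + δ, d = x − δ.) -/

import Mathlib

/-!
`hpell m + pell m * √2 = (1 + √2) ^ m`, so `hpell m ^ 2 - 2 * pell m ^ 2 = (-1) ^ m`, and the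
move multiplies `x + δ√2` by a unit of norm one, which preserves the norm by Brahmagupta's
identity.
Since `pell (2 * k)` is even, in the coordinates `c = x + δ`, `d = x - δ` the move is an integer
matrix of determinant one, and such a matrix preserves `gcd c d`.
-/

/-- Pell numbers: P 0 = 0, P 1 = 1, P (m+2) = 2·P (m+1) + P m. -/
def pell : ℕ → ℕ
  | 0 => 0
  | 1 => 1
  | m + 2 => 2 * pell (m + 1) + pell m

/-- Half-companion Pell numbers: H 0 = 1, H 1 = 1, H (m+2) = 2·H (m+1) + H m. -/
def hpell : ℕ → ℕ
  | 0 => 1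
  | 1 => 1
  | m + 2 => 2 * hpell (m + 1) + hpell m

theorem pell_succ_and_hpell_succ (m : ℕ) :
    pell (m + 1) = pell m + hpell m ∧ hpell (m + 1) = hpell m + 2 * pell m := by
  induction m with
  | zero => simp [pell, hpell]
  | succ n ih =>
    have hP : pell (n + 1 + 1) = 2 * pell (n + 1) + pell n := rfl
    have hH : hpell (n + 1 + 1) = 2 * hpell (n + 1) + hpell n := rfl
    omega

theorem hpell_sq_sub_two_mul_pell_sq (m : ℕ) :
    (hpell m : ℤ) ^ 2 - 2 * (pell m : ℤ) ^ 2 = (-1) ^ m := by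
  induction m with
  | zero => simp [pell, hpell]
  | succ n ih =>
    obtain ⟨hP, hH⟩ := pell_succ_and_hpell_succ n
    rw [hP, hH, pow_succ]
    push_cast
    linear_combination -ih

theorem even_pell_two_mul (k : ℕ) : Even (pell (2 * k)) := by
  induction k with
  | zero => exact ⟨0, rfl⟩
  | succ n ih =>
    have h : pell (2 * n + 2) = 2 * pell (2 * n + 1) + pell (2 * n) := rfl
    rw [Nat.mul_succ, h]
    exact (even_two_mul _).add ih

theorem Int.gcd_dvd_gcd_mul_add_mul (a b c d u v : ℤ) :
    Int.gcd u v ∣ Int.gcd (a * u + b * v) (c * u + d * v) := by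
  have hu := Int.gcd_dvd_left u v
  have hv := Int.gcd_dvd_right u v
  exact Int.dvd_gcd ((hu.mul_left a).add (hv.mul_left b)) ((hu.mul_left c).add (hv.mul_left d))

theorem Int.gcd_mul_add_mul_of_det_eq_one {a b c d : ℤ} (h : a * d - b * c = 1) (u v : ℤ) :
    Int.gcd (a * u + b * v) (c * u + d * v) = Int.gcd u v := by
  refine Nat.dvd_antisymm ?_ (Int.gcd_dvd_gcd_mul_add_mul a b c d u v)
  -- apply the inverse matrix `!![d, -b; -c, a]`
  convert Int.gcd_dvd_gcd_mul_add_mul d (-b) (-c) a (a * u + b * v) (c * u + d * v) using 2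
  · linear_combination -u * h
  · linear_combination -v * h

theorem stmt_19 (x δ ε : ℤ) (h : x ^ 2 - 2 * δ ^ 2 = 2 - ε ^ 2) (k : ℕ) :
    (hpell (2*k) : ℤ) ^ 2 - 2 * (pell (2*k) : ℤ) ^ 2 = 1 ∧
    ((hpell (2*k) : ℤ) * x + 2 * (pell (2*k) : ℤ) * δ) ^ 2 -
        2 * ((pell (2*k) : ℤ) * x + (hpell (2*k) : ℤ) * δ) ^ 2 = 2 - ε ^ 2 ∧
    Int.gcd (((hpell (2*k) : ℤ) * x + 2 * (pell (2*k) : ℤ) * δ) +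
          ((pell (2*k) : ℤ) * x + (hpell (2*k) : ℤ) * δ))
        (((hpell (2*k) : ℤ) * x + 2 * (pell (2*k) : ℤ) * δ) -
          ((pell (2*k) : ℤ) * x + (hpell (2*k) : ℤ) * δ)) =
      Int.gcd (x + δ) (x - δ) := by
  have hnorm : (hpell (2*k) : ℤ) ^ 2 - 2 * (pell (2*k) : ℤ) ^ 2 = 1 := by
    rw [hpell_sq_sub_two_mul_pell_sq, (even_two_mul k).neg_one_pow]
  refine ⟨hnorm, by linear_combination (x ^ 2 - 2 * δ ^ 2) * hnorm + h, ?_⟩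
  obtain ⟨q, hq⟩ := even_pell_two_mul k
  have hP : (pell (2*k) : ℤ) = 2 * q := by rw [hq]; push_cast; ring
  set H : ℤ := (hpell (2*k) : ℤ)
  have hdet : (H + 3 * q) * (H - 3 * q) - (-q) * q = 1 := by
    linear_combination hnorm + 2 * (pell (2*k) + 2 * q) * hP
  convert Int.gcd_mul_add_mul_of_det_eq_one hdet (x + δ) (x - δ) using 2 <;> rw [hP] <;> ring
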